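/- arXiv:1604.05509 — 2 statements merged into one kernel-verified Lean document; each statement's English description precedes it below -/
import Mathlib

section
/- Let X be a smooth projective surface over ℂ with χ(O_X) = 1 (e.g. a rational surface), H an ample divisor with K_X·H < 0, and ξ a divisor class with ξ·H = 0 and ξ ≠ 0 in Pic(X). Then ξ² ≤ −2. -/
/-!
For `ξ ≠ 0` with `ξ·H = 0`, neither `ξ` nor `K - ξ` is effective: their `H`-degrees are `0`
and `K·H < 0`. Hence `χ(ξ) ≤ h⁰(ξ) + h⁰(K - ξ) = 0`, likewise `χ(-ξ) ≤ 0`, and Riemann–Roch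
`χ(ξ) + χ(-ξ) = 2 + ξ²` gives `ξ² ≤ -2`.
-/

section

variable {Pic : Type*} [AddCommGroup Pic] (deg : Pic →+ ℤ) {h0 : Pic → ℕ}

theorem h0_eq_zero_of_deg_nonpos (hEff : ∀ ξ : Pic, ξ ≠ 0 → h0 ξ ≠ 0 → 0 < deg ξ)
    {η : Pic} (hη : η ≠ 0) (hdeg : deg η ≤ 0) : h0 η = 0 := by
  by_contra h
  exact (hEff η hη h).not_ge hdeg

theorem h0_eq_zero_of_deg_neg (hEff : ∀ ξ : Pic, ξ ≠ 0 → h0 ξ ≠ 0 → 0 < deg ξ)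
    {η : Pic} (hdeg : deg η < 0) : h0 η = 0 :=
  h0_eq_zero_of_deg_nonpos deg hEff (by rintro rfl; simp at hdeg) hdeg.le

theorem chi_nonpos_of_deg_eq_zero {h2 : Pic → ℕ} {chi : Pic → ℤ} {K : Pic}
    (hchile : ∀ ξ : Pic, chi ξ ≤ (h0 ξ : ℤ) + (h2 ξ : ℤ))
    (hSerre : ∀ ξ : Pic, h2 ξ = h0 (K - ξ))
    (hEff : ∀ ξ : Pic, ξ ≠ 0 → h0 ξ ≠ 0 → 0 < deg ξ) (hK : deg K < 0)
    {η : Pic} (hη : η ≠ 0) (hdeg : deg η = 0) : chi η ≤ 0 := by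
  have hh0 : h0 η = 0 := h0_eq_zero_of_deg_nonpos deg hEff hη hdeg.le
  have hh2 : h2 η = 0 := by
    rw [hSerre]
    exact h0_eq_zero_of_deg_neg deg hEff (by rwa [map_sub, hdeg, sub_zero])
  simpa [hh0, hh2] using hchile η

end

/-- On a smooth projective surface `X` over `ℂ` with `χ(O_X) = 1`,
`H` ample with `K_X·H < 0`, any nonzero divisor class `ξ` with `ξ·H = 0` has `ξ² ≤ -2`.
The geometric inputs (positivity of `H`-degree of nonzero effective divisors,
Serre duality `h²(ξ) = h⁰(K-ξ)`, Riemann–Roch `χ(ξ)+χ(-ξ) = 2χ(O)+ξ²`, and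
`χ ≤ h⁰ + h²`) are encoded as hypotheses on abstract data. -/
theorem stmt_0 (Pic : Type*) [AddCommGroup Pic] [Module ℤ Pic]
    (inter : Pic →ₗ[ℤ] Pic →ₗ[ℤ] ℤ)
    (h0 h2 : Pic → ℕ) (chi : Pic → ℤ) (K H : Pic)
    (hchiO : chi 0 = 1)
    (hRR : ∀ ξ : Pic, chi ξ + chi (-ξ) = 2 * chi 0 + inter ξ ξ)
    (hchile : ∀ ξ : Pic, chi ξ ≤ (h0 ξ : ℤ) + (h2 ξ : ℤ))
    (hSerre : ∀ ξ : Pic, h2 ξ = h0 (K - ξ))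
    (hEff : ∀ ξ : Pic, ξ ≠ 0 → h0 ξ ≠ 0 → 0 < inter ξ H)
    (hKH : inter K H < 0)
    (ξ : Pic) (hξH : inter ξ H = 0) (hne : ξ ≠ 0) :
    inter ξ ξ ≤ -2 := by
  let deg : Pic →+ ℤ := (inter.flip H).toAddMonoidHom
  have hχ : chi ξ ≤ 0 :=
    chi_nonpos_of_deg_eq_zero deg hchile hSerre hEff hKH hne hξH
  have hχneg : chi (-ξ) ≤ 0 :=
    chi_nonpos_of_deg_eq_zero deg hchile hSerre hEff hKH (neg_ne_zero.mpr hne)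
      (by simp [deg, hξH])
  have := hRR ξ
  rw [hchiO] at this
  omega
end

section
/- Let k ≥ 2 and let (a₁,b₁), …, (a_k,b_k) be pairs of nonnegative integers, each pair nonzero, with Σᵢ aᵢ ≥ 2 and Σᵢ bᵢ ≥ 2. Then 2·Σ_{i<j} (aᵢb_j + a_jbᵢ) ≥ k + 2. -/
/-! Write `Aᵢ = Σ_{j ≠ i} aⱼ` and `Bᵢ = Σ_{j ≠ i} bⱼ`. Counting each unordered pair twice,
`2·Σ_{i<j} (aᵢbⱼ + aⱼbᵢ) = Σᵢ (aᵢBᵢ + bᵢAᵢ)`, the sum of the intersection numbers of each class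
with the sum of the others. Both `(aᵢ, bᵢ)` and `(Aᵢ, Bᵢ)` are nonzero (the latter because `k ≥ 2`)
and they add up to `(Σ a, Σ b)` with both coordinates `≥ 2`; a short case check shows that then
`aᵢBᵢ + bᵢAᵢ ≥ 2`. Summing gives `2k ≥ k + 2`. -/

open Finset

lemma two_le_mul_add_mul {x y A B : ℕ} (hx : ¬(x = 0 ∧ y = 0)) (hA : ¬(A = 0 ∧ B = 0))
    (hxA : 2 ≤ x + A) (hyB : 2 ≤ y + B) : 2 ≤ x * B + y * A := by
  rcases Nat.eq_zero_or_pos x with rfl | hx₀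
  · have : 1 ≤ y := by omega
    have : 2 ≤ A := by omega
    nlinarith
  rcases Nat.eq_zero_or_pos y with rfl | hy₀
  · have : 2 ≤ B := by omega
    nlinarith
  rcases Nat.eq_zero_or_pos A with rfl | hA₀
  · have : 1 ≤ B := by omega
    have : 2 ≤ x := by omega
    nlinarith
  rcases Nat.eq_zero_or_pos B with rfl | hB₀
  · have : 2 ≤ y := by omega
    nlinarith
  nlinarith

section PairSums

variable {ι M : Type*} [Fintype ι] [LinearOrder ι] [AddCommMonoid M]

lemma sum_filter_lt_swap (f : ι → ι → M) :
    ∑ p ∈ univ.filter (fun p : ι × ι => p.1 < p.2), f p.2 p.1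
      = ∑ p ∈ univ.filter (fun p : ι × ι => p.2 < p.1), f p.1 p.2 :=
  sum_nbij' Prod.swap Prod.swap (by simp) (by simp) (by simp) (by simp) (by simp)

lemma sum_filter_lt_add_swap (f : ι → ι → M) :
    ∑ p ∈ univ.filter (fun p : ι × ι => p.1 < p.2), (f p.1 p.2 + f p.2 p.1)
      = ∑ i, ∑ j ∈ univ.erase i, f i j := by
  rw [sum_add_distrib, sum_filter_lt_swap, sum_filter, sum_filter, ← sum_add_distrib,
    Fintype.sum_prod_type]
  refine sum_congr rfl fun i _ => ?_
  rw [← filter_ne', sum_filter]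
  refine sum_congr rfl fun j _ => ?_
  rcases lt_trichotomy i j with h | rfl | h
  · simp [h, h.ne', h.not_gt]
  · simp
  · simp [h, h.ne, h.not_gt]

end PairSums

section Intersection

variable {ι : Type*} [Fintype ι]

lemma two_le_mul_sum_erase_add_mul_sum_erase [Nontrivial ι] [DecidableEq ι] {a b : ι → ℕ}
    (hnz : ∀ i, ¬(a i = 0 ∧ b i = 0)) (ha : 2 ≤ ∑ i, a i) (hb : 2 ≤ ∑ i, b i) (i : ι) :
    2 ≤ a i * ∑ j ∈ univ.erase i, b j + b i * ∑ j ∈ univ.erase i, a j := by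
  have hai := add_sum_erase univ a (mem_univ i)
  have hbi := add_sum_erase univ b (mem_univ i)
  obtain ⟨j, hji⟩ := exists_ne i
  have hj : j ∈ univ.erase i := mem_erase.2 ⟨hji, mem_univ j⟩
  have haj : a j ≤ ∑ l ∈ univ.erase i, a l := single_le_sum (fun _ _ => Nat.zero_le _) hj
  have hbj : b j ≤ ∑ l ∈ univ.erase i, b l := single_le_sum (fun _ _ => Nat.zero_le _) hj
  have hj₀ := hnz j
  exact two_le_mul_add_mul (hnz i) (by omega) (by omega) (by omega)

lemma two_mul_sum_filter_lt [LinearOrder ι] (a b : ι → ℕ) :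
    2 * ∑ p ∈ univ.filter (fun p : ι × ι => p.1 < p.2), (a p.1 * b p.2 + a p.2 * b p.1)
      = ∑ i, (a i * ∑ j ∈ univ.erase i, b j + b i * ∑ j ∈ univ.erase i, a j) := by
  rw [two_mul]
  nth_rw 2 [← sum_congr rfl fun p _ => add_comm (a p.2 * b p.1) (a p.1 * b p.2)]
  rw [sum_filter_lt_add_swap (fun i j => a i * b j),
    sum_filter_lt_add_swap (fun i j => a j * b i)]
  simp only [sum_add_distrib, mul_sum, mul_comm (a _) (b _)]

theorem card_add_two_le_two_mul_sum_filter_lt [LinearOrder ι] (hι : 2 ≤ Fintype.card ι)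
    {a b : ι → ℕ} (hnz : ∀ i, ¬(a i = 0 ∧ b i = 0)) (ha : 2 ≤ ∑ i, a i)
    (hb : 2 ≤ ∑ i, b i) :
    Fintype.card ι + 2
      ≤ 2 * ∑ p ∈ univ.filter (fun p : ι × ι => p.1 < p.2), (a p.1 * b p.2 + a p.2 * b p.1) := by
  have : Nontrivial ι := Fintype.one_lt_card_iff_nontrivial.1 hι
  calc Fintype.card ι + 2 ≤ ∑ _i : ι, 2 := by rw [sum_const, card_univ, smul_eq_mul]; omega
    _ ≤ _ := sum_le_sum fun i _ => two_le_mul_sum_erase_add_mul_sum_erase hnz ha hb i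
    _ = _ := (two_mul_sum_filter_lt a b).symm

end Intersection

/-- For `k ≥ 2` pairs `(aᵢ, bᵢ)` of nonnegative integers, each pair
nonzero, with `Σᵢ aᵢ ≥ 2` and `Σᵢ bᵢ ≥ 2`, one has
`2·Σ_{i<j} (aᵢb_j + a_jbᵢ) ≥ k + 2`. -/
theorem stmt_11 (k : ℕ) (hk : 2 ≤ k) (a b : Fin k → ℕ)
    (hnz : ∀ i, ¬(a i = 0 ∧ b i = 0))
    (ha : 2 ≤ ∑ i, a i) (hb : 2 ≤ ∑ i, b i) :
    k + 2 ≤ 2 * ∑ p ∈ Finset.univ.filter (fun p : Fin k × Fin k => p.1 < p.2),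
      (a p.1 * b p.2 + a p.2 * b p.1) := by
  simpa using card_add_two_le_two_mul_sum_filter_lt (by simpa using hk) hnz ha hb
end
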